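/- arXiv:2212.10048 — 3 statements merged into one kernel-verified Lean document; each statement's English description precedes it below -/
import Mathlib

section
/- Let H be a real inner product space and let f : H → ℝ be differentiable with gradient ∇f, where ∇f is L-Lipschitz: ‖∇f(x) − ∇f(y)‖ ≤ L·‖x − y‖ for all x, y ∈ H. Let η > 0, let x, u ∈ H, and set x' = x − η·∇f(u). Then f(x') − f(x) ≤ ((L + 1)/2 − 1/η)·‖x' − x‖² + (L²/2)·‖x − u‖². -/
/-!
Along the segment from `x` to `y = x + d`, the Lipschitz gradient gives the descent lemma
`f y ≤ f x + ⟪∇f x, d⟫ + (L/2)‖d‖²`. For the stale step `d = -η ∇f u` the linear term splits as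
`-η‖∇f u‖² + η⟪∇f u - ∇f x, ∇f u⟫`, and the error term is absorbed by Cauchy–Schwarz, the
Lipschitz bound `‖∇f u - ∇f x‖ ≤ L‖x - u‖` and `ab ≤ a²/2 + b²/2`.
-/

open InnerProductSpace
open scoped RealInnerProductSpace

section

variable {H : Type*} [NormedAddCommGroup H] [InnerProductSpace ℝ H]

theorem HasGradientAt.hasDerivAt_comp_add_smul [CompleteSpace H] {f : H → ℝ} {g x d : H}
    {t : ℝ} (hf : HasGradientAt f g (x + t • d)) :
    HasDerivAt (fun s : ℝ => f (x + s • d)) ⟪g, d⟫_ℝ t := by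
  have hline : HasDerivAt (fun s : ℝ => x + s • d) d t := by
    simpa using ((hasDerivAt_id t).smul_const d).const_add x
  simpa [toDual_apply_apply, Function.comp_def] using
    hf.hasFDerivAt.comp_hasDerivAt t hline

theorem descent_lemma [CompleteSpace H] {f : H → ℝ} {g : H → H} {L : ℝ}
    (hgrad : ∀ x, HasGradientAt f (g x) x) (hlip : ∀ x y, ‖g x - g y‖ ≤ L * ‖x - y‖)
    (x y : H) :
    f y ≤ f x + ⟪g x, y - x⟫_ℝ + L / 2 * ‖y - x‖ ^ 2 := by
  set d := y - x
  set φ : ℝ → ℝ := fun t => f (x + t • d) - t * ⟪g x, d⟫_ℝ - L / 2 * t ^ 2 * ‖d‖ ^ 2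
  have hφ' : ∀ t : ℝ, HasDerivAt φ (⟪g (x + t • d) - g x, d⟫_ℝ - L * t * ‖d‖ ^ 2) t := by
    intro t
    have hf : HasDerivAt (fun s : ℝ => f (x + s • d)) ⟪g (x + t • d), d⟫_ℝ t :=
      (hgrad _).hasDerivAt_comp_add_smul
    have hsq := ((hasDerivAt_pow 2 t).const_mul (L / 2)).mul_const (‖d‖ ^ 2)
    refine ((hf.sub ((hasDerivAt_id t).mul_const ⟪g x, d⟫_ℝ)).sub hsq).congr_deriv ?_
    simp only [inner_sub_left, one_mul]
    push_cast
    ring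
  have hφ'_nonpos : ∀ t ∈ interior (Set.Ici (0 : ℝ)),
      ⟪g (x + t • d) - g x, d⟫_ℝ - L * t * ‖d‖ ^ 2 ≤ 0 := by
    intro t ht
    rw [interior_Ici, Set.mem_Ioi] at ht
    have hlip_t : ‖g (x + t • d) - g x‖ ≤ L * (t * ‖d‖) := by
      simpa [norm_smul, abs_of_pos ht] using hlip (x + t • d) x
    rw [sub_nonpos]
    calc ⟪g (x + t • d) - g x, d⟫_ℝ ≤ ‖g (x + t • d) - g x‖ * ‖d‖ := real_inner_le_norm _ _
      _ ≤ L * (t * ‖d‖) * ‖d‖ := by gcongr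
      _ = L * t * ‖d‖ ^ 2 := by ring
  have hanti : AntitoneOn φ (Set.Ici 0) :=
    antitoneOn_of_hasDerivWithinAt_nonpos (convex_Ici 0)
      (fun t _ => (hφ' t).continuousAt.continuousWithinAt)
      (fun t _ => (hφ' t).hasDerivWithinAt) hφ'_nonpos
  have h01 : φ 1 ≤ φ 0 := hanti (by simp) (by simp) zero_le_one
  simp only [φ, d, one_smul, add_sub_cancel, zero_smul, add_zero] at h01
  linarith

theorem mul_inner_le_of_norm_le {v w : H} {r : ℝ} (hv : ‖v‖ ≤ r) (η : ℝ) :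
    η * ⟪v, w⟫_ℝ ≤ r ^ 2 / 2 + η ^ 2 / 2 * ‖w‖ ^ 2 := by
  have hcs : η * ⟪v, w⟫_ℝ ≤ r * (|η| * ‖w‖) :=
    calc η * ⟪v, w⟫_ℝ ≤ |η| * (‖v‖ * ‖w‖) :=
          (le_abs_self _).trans (by rw [abs_mul]; gcongr; exact abs_real_inner_le_norm v w)
      _ ≤ |η| * (r * ‖w‖) := by gcongr
      _ = r * (|η| * ‖w‖) := by ring
  nlinarith [sq_nonneg (r - |η| * ‖w‖), sq_abs η]

end

theorem stale_gradient_descent_estimate_general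
    {H : Type*} [NormedAddCommGroup H] [InnerProductSpace ℝ H] [CompleteSpace H]
    (f : H → ℝ) (g : H → H) (L : ℝ)
    (hgrad : ∀ x, HasGradientAt f (g x) x)
    (hlip : ∀ x y, ‖g x - g y‖ ≤ L * ‖x - y‖)
    (η : ℝ) (x u : H) :
    f (x - η • g u) - f x
      ≤ ((L + 1) / 2 - 1 / η) * ‖(x - η • g u) - x‖ ^ 2 + (L ^ 2 / 2) * ‖x - u‖ ^ 2 := by
  have hstep : (x - η • g u) - x = -(η • g u) := sub_sub_cancel_left x _
  have hstep_sq : ‖(x - η • g u) - x‖ ^ 2 = η ^ 2 * ‖g u‖ ^ 2 := by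
    rw [hstep, norm_neg, norm_smul, mul_pow, Real.norm_eq_abs, sq_abs]
  have hlinear : ⟪g x, (x - η • g u) - x⟫_ℝ = -(η * ‖g u‖ ^ 2) + η * ⟪g u - g x, g u⟫_ℝ := by
    rw [hstep, inner_neg_right, real_inner_smul_right, inner_sub_left,
      real_inner_self_eq_norm_sq, real_inner_comm]
    ring
  have hstale : η * ⟪g u - g x, g u⟫_ℝ ≤ (L * ‖x - u‖) ^ 2 / 2 + η ^ 2 / 2 * ‖g u‖ ^ 2 :=
    mul_inner_le_of_norm_le (by simpa only [norm_sub_rev x u] using hlip u x) η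
  -- true also at `η = 0`, where `1 / η = 0`
  have hcoeff : 1 / η * (η ^ 2 * ‖g u‖ ^ 2) = η * ‖g u‖ ^ 2 := by
    rw [← mul_assoc, one_div_mul_eq_div, sq η, mul_self_div_self]
  have hdescent := descent_lemma hgrad hlip x (x - η • g u)
  rw [hstep_sq, hlinear] at hdescent
  rw [hstep_sq, sub_mul, hcoeff]
  linarith [hdescent, hstale]

/-- Stale-gradient descent estimate (core of Lemma 1 of the paper): if `f` has an
`L`-Lipschitz gradient `g`, `η > 0`, and the update `x' = x - η • g u` is performed with
a gradient evaluated at a stale point `u`, then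
`f x' - f x ≤ ((L + 1)/2 - 1/η)·‖x' - x‖² + (L²/2)·‖x - u‖²`. -/
theorem stale_gradient_descent_estimate
    {H : Type*} [NormedAddCommGroup H] [InnerProductSpace ℝ H] [CompleteSpace H]
    (f : H → ℝ) (g : H → H) (L : ℝ)
    (hgrad : ∀ x, HasGradientAt f (g x) x)
    (hlip : ∀ x y, ‖g x - g y‖ ≤ L * ‖x - y‖)
    (η : ℝ) (hη : 0 < η) (x u : H) :
    f (x - η • g u) - f x
      ≤ ((L + 1) / 2 - 1 / η) * ‖(x - η • g u) - x‖ ^ 2 + (L ^ 2 / 2) * ‖x - u‖ ^ 2 :=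
  stale_gradient_descent_estimate_general f g L hgrad hlip η x u
end

section
/- Let H₁ and H₂ be real inner product spaces and let f : H₁ × H₂ → ℝ be differentiable with gradient ∇f on the product space (with the product inner product), where ∇f is L-Lipschitz (L > 0): ‖∇f(p) − ∇f(q)‖ ≤ L·‖p − q‖ for all p, q. For (x, y) write ∇ₓf(x,y) for the gradient at x of x ↦ f(x,y) and ∇_yf(x,y) for the gradient at y of y ↦ f(x,y). Assume f is bounded below by f*, let 0 < ηₓ < 2/L and 0 < η_y < 2/L, set d = min(ηₓ − L·ηₓ²/2, η_y − L·η_y²/2) > 0, and define sequences (xᵗ), (yᵗ) recursively by xᵗ⁺¹ = xᵗ − ηₓ·∇ₓf(xᵗ, yᵗ) and yᵗ⁺¹ = yᵗ − η_y·∇_yf(xᵗ⁺¹, yᵗ) for t ≥ T₁, starting from arbitrary x^{T₁}, y^{T₁}. Then for every T > T₁: (1/(T − T₁)) · Σ_{t=T₁}^{T−1} (‖∇ₓf(xᵗ, yᵗ)‖² + ‖∇_yf(xᵗ⁺¹, yᵗ)‖²) ≤ (f(x^{T₁}, y^{T₁}) − f*)/((T − T₁)·d). -/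
/-!
Along the segment from `p` to `p + v`, the `L`-Lipschitz gradient gives the descent lemma
`f (p + v) ≤ f p + ⟪∇f p, v⟫ + L/2 ‖v‖²`. A step `x ↦ x - η ∇ₓf` moves only the first block of
coordinates, along the first block of `∇f` (which is `∇ₓf`), so it lowers `f` by at least
`(η - Lη²/2) ‖∇ₓf‖²`; likewise for the `y`-step. Hence each alternating sweep lowers `f` by at
least `d (‖∇ₓf‖² + ‖∇_yf‖²)`, and telescoping over the iterations, with `f ≥ f*` at the end,
bounds `d` times the sum by `f (x^{T₁}, y^{T₁}) - f*`.
-/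

open Finset

section Descent

variable {E : Type*} [NormedAddCommGroup E] [InnerProductSpace ℝ E] [CompleteSpace E]
  {f : E → ℝ} {g : E → E} {L : ℝ}

theorem le_add_inner_add_sq_of_lipschitz_gradient (hgrad : ∀ p, HasGradientAt f (g p) p)
    (hlip : ∀ p q, ‖g p - g q‖ ≤ L * ‖p - q‖) (p v : E) :
    f (p + v) ≤ f p + inner ℝ (g p) v + L / 2 * ‖v‖ ^ 2 := by
  set φ : ℝ → ℝ := fun t => f (p + t • v) - t * inner ℝ (g p) v - L / 2 * t ^ 2 * ‖v‖ ^ 2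
  have hφ : ∀ t, HasDerivAt φ
      (inner ℝ (g (p + t • v)) v - inner ℝ (g p) v - L * t * ‖v‖ ^ 2) t := by
    intro t
    have hline : HasDerivAt (fun t : ℝ => p + t • v) v t := by
      simpa using ((hasDerivAt_id t).smul_const v).const_add p
    have hf := (hgrad (p + t • v)).hasFDerivAt.comp_hasDerivAt t hline
    simp only [InnerProductSpace.toDual_apply_apply] at hf
    refine ((hf.sub ((hasDerivAt_id t).mul_const (inner ℝ (g p) v))).sub
      (((hasDerivAt_pow 2 t).const_mul (L / 2)).mul_const (‖v‖ ^ 2))).congr_deriv ?_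
    ring
  have hφ' : ∀ t : ℝ, 0 < t →
      inner ℝ (g (p + t • v)) v - inner ℝ (g p) v - L * t * ‖v‖ ^ 2 ≤ 0 := by
    intro t ht
    calc inner ℝ (g (p + t • v)) v - inner ℝ (g p) v - L * t * ‖v‖ ^ 2
        = inner ℝ (g (p + t • v) - g p) v - L * t * ‖v‖ ^ 2 := by rw [inner_sub_left]
      _ ≤ ‖g (p + t • v) - g p‖ * ‖v‖ - L * t * ‖v‖ ^ 2 := by
          gcongr; exact real_inner_le_norm _ _
      _ ≤ L * ‖t • v‖ * ‖v‖ - L * t * ‖v‖ ^ 2 := by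
          gcongr; simpa using hlip (p + t • v) p
      _ = 0 := by rw [norm_smul, Real.norm_of_nonneg ht.le]; ring
  have hanti : AntitoneOn φ (Set.Ici 0) :=
    antitoneOn_of_hasDerivWithinAt_nonpos (convex_Ici 0)
      (fun t _ => (hφ t).continuousAt.continuousWithinAt)
      (fun t _ => (hφ t).hasDerivWithinAt)
      (fun t ht => hφ' t (by simpa using ht))
  have h := hanti Set.self_mem_Ici (by norm_num : (1 : ℝ) ∈ Set.Ici 0) zero_le_one
  simp only [φ, one_smul, zero_smul, add_zero] at h
  linarith

theorem image_sub_smul_le_of_inner_eq_norm_sq (hgrad : ∀ p, HasGradientAt f (g p) p)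
    (hlip : ∀ p q, ‖g p - g q‖ ≤ L * ‖p - q‖) {p d : E} (hd : inner ℝ (g p) d = ‖d‖ ^ 2)
    (η : ℝ) : f (p - η • d) ≤ f p - (η - L * η ^ 2 / 2) * ‖d‖ ^ 2 := by
  have h := le_add_inner_add_sq_of_lipschitz_gradient hgrad hlip p (-(η • d))
  rw [inner_neg_right, inner_smul_right, hd, norm_neg, norm_smul, mul_pow, Real.norm_eq_abs,
    sq_abs, ← sub_eq_add_neg] at h
  linarith

end Descent

section BlockCoordinates

variable {H₁ H₂ : Type*} [NormedAddCommGroup H₁] [InnerProductSpace ℝ H₁] [CompleteSpace H₁]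
  [NormedAddCommGroup H₂] [InnerProductSpace ℝ H₂] [CompleteSpace H₂]
  {f : WithLp 2 (H₁ × H₂) → ℝ} {G : WithLp 2 (H₁ × H₂)}

theorem HasGradientAt.comp_toLp_left {a : H₁} {b : H₂}
    (h : HasGradientAt f G (WithLp.toLp 2 (a, b))) :
    HasGradientAt (fun a' => f (WithLp.toLp 2 (a', b))) G.fst a := by
  rw [hasGradientAt_iff_hasFDerivAt]
  have hmk := (WithLp.prodContinuousLinearEquiv 2 ℝ H₁ H₂).symm.hasFDerivAt.comp a
    (hasFDerivAt_prodMk_left a b)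
  refine (h.hasFDerivAt.comp a hmk).congr_fderiv ?_
  ext v
  simp

theorem HasGradientAt.comp_toLp_right {a : H₁} {b : H₂}
    (h : HasGradientAt f G (WithLp.toLp 2 (a, b))) :
    HasGradientAt (fun b' => f (WithLp.toLp 2 (a, b'))) G.snd b := by
  rw [hasGradientAt_iff_hasFDerivAt]
  have hmk := (WithLp.prodContinuousLinearEquiv 2 ℝ H₁ H₂).symm.hasFDerivAt.comp b
    (hasFDerivAt_prodMk_right a b)
  refine (h.hasFDerivAt.comp b hmk).congr_fderiv ?_
  ext v
  simp

variable {g : WithLp 2 (H₁ × H₂) → WithLp 2 (H₁ × H₂)} {L : ℝ}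

theorem image_toLp_sub_smul_fst_le (hgrad : ∀ p, HasGradientAt f (g p) p)
    (hlip : ∀ p q, ‖g p - g q‖ ≤ L * ‖p - q‖) (a : H₁) (b : H₂) (η : ℝ) :
    f (WithLp.toLp 2 (a - η • (g (WithLp.toLp 2 (a, b))).fst, b))
      ≤ f (WithLp.toLp 2 (a, b))
        - (η - L * η ^ 2 / 2) * ‖(g (WithLp.toLp 2 (a, b))).fst‖ ^ 2 := by
  convert image_sub_smul_le_of_inner_eq_norm_sq hgrad hlip (p := WithLp.toLp 2 (a, b))
    (d := WithLp.toLp 2 ((g (WithLp.toLp 2 (a, b))).fst, 0)) (by simp) η using 3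
  · ext <;> simp
  · simp

theorem image_toLp_sub_smul_snd_le (hgrad : ∀ p, HasGradientAt f (g p) p)
    (hlip : ∀ p q, ‖g p - g q‖ ≤ L * ‖p - q‖) (a : H₁) (b : H₂) (η : ℝ) :
    f (WithLp.toLp 2 (a, b - η • (g (WithLp.toLp 2 (a, b))).snd))
      ≤ f (WithLp.toLp 2 (a, b))
        - (η - L * η ^ 2 / 2) * ‖(g (WithLp.toLp 2 (a, b))).snd‖ ^ 2 := by
  convert image_sub_smul_le_of_inner_eq_norm_sq hgrad hlip (p := WithLp.toLp 2 (a, b))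
    (d := WithLp.toLp 2 (0, (g (WithLp.toLp 2 (a, b))).snd)) (by simp) η using 3
  · ext <;> simp
  · simp

theorem alternating_step_add_le (hgrad : ∀ p, HasGradientAt f (g p) p)
    (hlip : ∀ p q, ‖g p - g q‖ ≤ L * ‖p - q‖) {ηx ηy d : ℝ}
    (hdx : d ≤ ηx - L * ηx ^ 2 / 2) (hdy : d ≤ ηy - L * ηy ^ 2 / 2)
    {a a' : H₁} {b b' : H₂} {u : H₁} {v : H₂}
    (hu : HasGradientAt (fun a'' => f (WithLp.toLp 2 (a'', b))) u a)
    (hv : HasGradientAt (fun b'' => f (WithLp.toLp 2 (a', b''))) v b)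
    (ha' : a' = a - ηx • u) (hb' : b' = b - ηy • v) :
    f (WithLp.toLp 2 (a', b')) + d * (‖u‖ ^ 2 + ‖v‖ ^ 2) ≤ f (WithLp.toLp 2 (a, b)) := by
  have hx_desc := image_toLp_sub_smul_fst_le hgrad hlip a b ηx
  have hy_desc := image_toLp_sub_smul_snd_le hgrad hlip a' b ηy
  rw [← hu.unique (hgrad _).comp_toLp_left, ← ha'] at hx_desc
  rw [← hv.unique (hgrad _).comp_toLp_right, ← hb'] at hy_desc
  nlinarith [mul_le_mul_of_nonneg_right hdx (sq_nonneg ‖u‖),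
    mul_le_mul_of_nonneg_right hdy (sq_nonneg ‖v‖)]

end BlockCoordinates

theorem Finset.sum_Ico_le_sub_of_add_le {M : Type*} [AddCommGroup M] [PartialOrder M]
    [IsOrderedAddMonoid M] {u c : ℕ → M} {m n : ℕ} (hmn : m ≤ n)
    (h : ∀ t ∈ Ico m n, u (t + 1) + c t ≤ u t) : ∑ t ∈ Ico m n, c t ≤ u m - u n := by
  calc ∑ t ∈ Ico m n, c t ≤ ∑ t ∈ Ico m n, -(u (t + 1) - u t) :=
        sum_le_sum fun t ht => by rw [neg_sub]; exact le_sub_iff_add_le'.2 (h t ht)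
    _ = u m - u n := by rw [sum_neg_distrib, sum_Ico_sub u hmn, neg_sub]

theorem sub_mul_sq_div_two_pos {L η : ℝ} (hL : 0 < L) (hη : 0 < η) (hη2 : η < 2 / L) :
    0 < η - L * η ^ 2 / 2 := by
  nlinarith [(lt_div_iff₀ hL).1 hη2]

/-- Averaged stationarity bound for alternating gradient descent (Eq. (A.160)):
for an `L`-smooth `f` (on the ℓ²-product space) bounded below by `fstar`, with step sizes
`0 < ηx < 2/L`, `0 < ηy < 2/L` and `d = min (ηx - L·ηx²/2) (ηy - L·ηy²/2)`, the average of
the squared partial-gradient norms over iterations `T₁, …, T-1` is bounded by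
`(f(x^{T₁}, y^{T₁}) - fstar) / ((T - T₁)·d)`. -/
theorem alternating_descent_average_bound
    {H₁ H₂ : Type*} [NormedAddCommGroup H₁] [InnerProductSpace ℝ H₁] [CompleteSpace H₁]
    [NormedAddCommGroup H₂] [InnerProductSpace ℝ H₂] [CompleteSpace H₂]
    (f : WithLp 2 (H₁ × H₂) → ℝ) (g : WithLp 2 (H₁ × H₂) → WithLp 2 (H₁ × H₂)) (L : ℝ)
    (hL : 0 < L)
    (hgrad : ∀ p, HasGradientAt f (g p) p)
    (hlip : ∀ p q, ‖g p - g q‖ ≤ L * ‖p - q‖)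
    (gx : H₁ → H₂ → H₁) (gy : H₁ → H₂ → H₂)
    (hgx : ∀ x y, HasGradientAt
      (fun x' => f ((WithLp.equiv 2 (H₁ × H₂)).symm (x', y))) (gx x y) x)
    (hgy : ∀ x y, HasGradientAt
      (fun y' => f ((WithLp.equiv 2 (H₁ × H₂)).symm (x, y'))) (gy x y) y)
    (fstar : ℝ) (hbdd : ∀ p, fstar ≤ f p)
    (ηx ηy : ℝ) (hηx : 0 < ηx) (hηx2 : ηx < 2 / L) (hηy : 0 < ηy) (hηy2 : ηy < 2 / L)
    (T₁ : ℕ) (x : ℕ → H₁) (y : ℕ → H₂)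
    (hx : ∀ t, T₁ ≤ t → x (t + 1) = x t - ηx • gx (x t) (y t))
    (hy : ∀ t, T₁ ≤ t → y (t + 1) = y t - ηy • gy (x (t + 1)) (y t))
    (T : ℕ) (hT : T₁ < T) :
    (1 / ((T - T₁ : ℕ) : ℝ)) *
        ∑ t ∈ Finset.Ico T₁ T, (‖gx (x t) (y t)‖ ^ 2 + ‖gy (x (t + 1)) (y t)‖ ^ 2)
      ≤ (f ((WithLp.equiv 2 (H₁ × H₂)).symm (x T₁, y T₁)) - fstar) /
          (((T - T₁ : ℕ) : ℝ) * min (ηx - L * ηx ^ 2 / 2) (ηy - L * ηy ^ 2 / 2)) := by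
  have hd : 0 < min (ηx - L * ηx ^ 2 / 2) (ηy - L * ηy ^ 2 / 2) :=
    lt_min (sub_mul_sq_div_two_pos hL hηx hηx2) (sub_mul_sq_div_two_pos hL hηy hηy2)
  have hdescent := Finset.sum_Ico_le_sub_of_add_le (u := fun t => f (WithLp.toLp 2 (x t, y t)))
    hT.le fun t ht => alternating_step_add_le hgrad hlip (min_le_left _ _) (min_le_right _ _)
      (hgx _ _) (hgy _ _) (hx t (Finset.mem_Ico.1 ht).1) (hy t (Finset.mem_Ico.1 ht).1)
  rw [← mul_sum] at hdescent
  have hN : (0 : ℝ) < ((T - T₁ : ℕ) : ℝ) := by exact_mod_cast Nat.sub_pos_of_lt hT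
  rw [WithLp.equiv_symm_apply, mul_comm _ (min _ _), ← div_div, one_div_mul_eq_div,
    div_le_div_iff_of_pos_right hN, le_div_iff₀' hd]
  linarith [hbdd (WithLp.toLp 2 (x T, y T))]
end

section
/- Let H be a real normed vector space, let u : ℕ → H be a sequence, let V ⊆ ℕ be a set of 'active' times, and let τ ≥ 1 be a natural number. Assume: (i) for every t, if t + 1 ∉ V then u(t+1) = u(t) (the sequence changes only at times in V); and (ii) for every t there exists s ∈ V with t < s ≤ t + τ (every window of τ consecutive times contains an active time). For each t let n(t) denote the least element of V that is strictly greater than t. Then for all natural numbers a ≤ b: Σ_{t=a}^{b} ‖u(n(t)) − u(t)‖² ≤ τ · Σ_{t=a}^{b+τ−1} ‖u(t+1) − u(t)‖². -/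
/-!
Before its next activation `n t` the sequence is idle, so `u (n t - 1) = u t` and the
stale change `u (n t) - u t` is the single increment at time `n t - 1 ∈ [t, t + τ)`.
Each increment index is hit by at most `τ` times `t`, which gives the factor `τ`.
-/

open Finset

theorem Finset.sum_comp_le_mul_sum {ι κ R : Type*} [DecidableEq κ] [CommSemiring R]
    [PartialOrder R] [IsOrderedRing R] {s : Finset ι} {t : Finset κ} {g : ι → κ}
    {f : κ → R} {m : ℕ} (hf : ∀ k ∈ t, 0 ≤ f k) (hg : ∀ i ∈ s, g i ∈ t)
    (hfiber : ∀ k ∈ t, #{i ∈ s | g i = k} ≤ m) :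
    ∑ i ∈ s, f (g i) ≤ m * ∑ k ∈ t, f k := by
  rw [← sum_fiberwise_of_maps_to hg, mul_sum]
  refine sum_le_sum fun k hk => ?_
  calc ∑ i ∈ s with g i = k, f (g i)
      = #{i ∈ s | g i = k} * f k := by
        rw [sum_congr rfl fun i hi => by rw [(mem_filter.1 hi).2], sum_const, nsmul_eq_mul]
    _ ≤ m * f k := by gcongr; exacts [hf k hk, hfiber k hk]

theorem Finset.sum_Icc_comp_le_mul_sum_Icc {R : Type*} [CommSemiring R] [PartialOrder R]
    [IsOrderedRing R] {f : ℕ → R} (hf : ∀ k, 0 ≤ f k) {g : ℕ → ℕ} {τ : ℕ}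
    (hg : ∀ t, t ≤ g t ∧ g t < t + τ) (a b : ℕ) :
    ∑ t ∈ Icc a b, f (g t) ≤ τ * ∑ k ∈ Icc a (b + τ - 1), f k := by
  refine sum_comp_le_mul_sum (fun k _ => hf k) (fun t ht => ?_) (fun k _ => ?_)
  · have := hg t
    simp only [mem_Icc] at ht ⊢
    omega
  · have hsub : {t ∈ Icc a b | g t = k} ⊆ Icc (k + 1 - τ) k := fun t ht => by
      have := hg t
      simp only [mem_filter, mem_Icc] at ht ⊢
      omega
    calc #{t ∈ Icc a b | g t = k} ≤ #(Icc (k + 1 - τ) k) := card_le_card hsub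
      _ ≤ τ := by rw [Nat.card_Icc]; omega

theorem eq_of_forall_mem_Ioc_notMem {α : Type*} {u : ℕ → α} {V : Set ℕ}
    (hidle : ∀ t, t + 1 ∉ V → u (t + 1) = u t) {t s : ℕ} (hts : t ≤ s)
    (hV : ∀ k ∈ Set.Ioc t s, k ∉ V) : u s = u t := by
  induction s, hts using Nat.le_induction with
  | base => rfl
  | succ s hts ih =>
    rw [hidle s (hV (s + 1) ⟨by omega, le_rfl⟩),
      ih fun k hk => hV k ⟨hk.1, hk.2.trans s.le_succ⟩]

theorem staleness_accumulation_general
    {H : Type*} [NormedAddCommGroup H]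
    (u : ℕ → H) (V : Set ℕ) (τ : ℕ)
    (hidle : ∀ t : ℕ, t + 1 ∉ V → u (t + 1) = u t)
    (hactive : ∀ t : ℕ, ∃ s ∈ V, t < s ∧ s ≤ t + τ)
    (n : ℕ → ℕ) (hn : ∀ t, IsLeast {s | s ∈ V ∧ t < s} (n t)) :
    ∀ a b : ℕ, a ≤ b →
      ∑ t ∈ Finset.Icc a b, ‖u (n t) - u t‖ ^ 2
        ≤ (τ : ℝ) * ∑ t ∈ Finset.Icc a (b + τ - 1), ‖u (t + 1) - u t‖ ^ 2 := by
  intro a b _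
  have hwindow : ∀ t, t ≤ n t - 1 ∧ n t - 1 < t + τ := fun t => by
    obtain ⟨s, hsV, hts, hst⟩ := hactive t
    have := (hn t).2 ⟨hsV, hts⟩
    have := (hn t).1.2
    omega
  have hidle_before : ∀ t, ∀ k ∈ Set.Ioc t (n t - 1), k ∉ V := fun t k hk hkV => by
    have : n t ≤ k := (hn t).2 ⟨hkV, hk.1⟩
    have : t < k ∧ k ≤ n t - 1 := hk
    omega
  have hstale : ∀ t, u (n t) - u t = u (n t - 1 + 1) - u (n t - 1) := fun t => by
    rw [Nat.sub_add_cancel (by have := (hn t).1.2; omega : 1 ≤ n t),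
      eq_of_forall_mem_Ioc_notMem hidle (hwindow t).1 (hidle_before t)]
  simp only [hstale]
  exact sum_Icc_comp_le_mul_sum_Icc (f := fun s => ‖u (s + 1) - u s‖ ^ 2)
    (fun _ => sq_nonneg _) hwindow a b

/-- Staleness-accumulation estimate (Eqs. (A.87-1)–(A.87-3)): if the sequence `u` only
changes at active times `V`, every window of `τ` consecutive times contains an active
time, and `n t` is the least active time strictly greater than `t`, then the total
squared change from each time to its next activation over `[a, b]` is bounded by `τ`
times the sum of consecutive squared increments over `[a, b + τ - 1]`. -/
theorem staleness_accumulation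
    {H : Type*} [NormedAddCommGroup H] [NormedSpace ℝ H]
    (u : ℕ → H) (V : Set ℕ) (τ : ℕ) (hτ : 1 ≤ τ)
    (hidle : ∀ t : ℕ, t + 1 ∉ V → u (t + 1) = u t)
    (hactive : ∀ t : ℕ, ∃ s ∈ V, t < s ∧ s ≤ t + τ)
    (n : ℕ → ℕ) (hn : ∀ t, IsLeast {s | s ∈ V ∧ t < s} (n t)) :
    ∀ a b : ℕ, a ≤ b →
      ∑ t ∈ Finset.Icc a b, ‖u (n t) - u t‖ ^ 2
        ≤ (τ : ℝ) * ∑ t ∈ Finset.Icc a (b + τ - 1), ‖u (t + 1) - u t‖ ^ 2 :=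
  staleness_accumulation_general u V τ hidle hactive n hn
end
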